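/- Let D be the harmonic frame with N = n+L and suppose 2Ls ≤ N/2 (i.e., Ls ≤ N/4). Then for every s-sparse z ∈ ℂ^N, ‖Dz‖₂² ≥ (1 − 2Ls/N) ‖z‖₂² ≥ (1/2)‖z‖₂². -/

import Mathlib

open Finset Matrix

noncomputable def l2norm {ι : Type*} [Fintype ι] (v : ι → ℂ) : ℝ :=
  Real.sqrt (∑ i, ‖v i‖ ^ 2)

open Classical in
noncomputable def sparsity {ι : Type*} [Fintype ι] (v : ι → ℂ) : ℕ :=
  (Finset.univ.filter fun i => v i ≠ 0).card

noncomputable def harmonicFrame (n L : ℕ) : Matrix (Fin n) (Fin (n + L)) ℂ :=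
  fun j k => (1 / (Real.sqrt (n + L) : ℝ)) *
    Complex.exp (2 * Real.pi * Complex.I * ((j : ℕ) : ℂ) * ((k : ℕ) : ℂ) / ((n + L : ℕ) : ℂ))

/-!
The Gram matrix `DᴴD` has diagonal `n/N` and, off the diagonal, entries `N⁻¹ ∑_{j<n} ζ^j` with `ζ`
a nontrivial `N`-th root of unity; since the full sum over `j < N` vanishes, these have modulus
at most `L/N`. Hence `‖Dz‖² = ⟪z, DᴴD z⟫ ≥ (n/N)‖z‖² - (L/N)(‖z‖₁² - ‖z‖²)`, and for `s`-sparse `z`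
Cauchy–Schwarz gives `‖z‖₁² ≤ s‖z‖²`, so `‖Dz‖² ≥ (1 - Ls/N)‖z‖²`.
-/

section Sparse

variable {ι κ : Type*} [Fintype ι] [Fintype κ]

theorem l2norm_sq (v : ι → ℂ) : l2norm v ^ 2 = ∑ i, ‖v i‖ ^ 2 :=
  Real.sq_sqrt (by positivity)

theorem sq_sum_norm_le_sparsity_mul (v : ι → ℂ) :
    (∑ i, ‖v i‖) ^ 2 ≤ sparsity v * ∑ i, ‖v i‖ ^ 2 := by
  classical
  have hsupp : ∀ f : ℂ → ℝ, f 0 = 0 →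
      ∑ i, f (v i) = ∑ i ∈ univ.filter fun i => v i ≠ 0, f (v i) := fun f hf =>
    (sum_filter_of_ne (p := fun i => v i ≠ 0) fun i _ hi hvi => hi (by rw [hvi, hf])).symm
  calc (∑ i, ‖v i‖) ^ 2 = (∑ i ∈ univ.filter fun i => v i ≠ 0, ‖v i‖) ^ 2 := by
        rw [hsupp _ norm_zero]
    _ ≤ sparsity v * ∑ i ∈ univ.filter fun i => v i ≠ 0, ‖v i‖ ^ 2 :=
        sq_sum_le_card_mul_sum_sq
    _ ≤ sparsity v * ∑ i, ‖v i‖ ^ 2 := by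
        rw [hsupp (‖·‖ ^ 2) (by simp)]

theorem re_star_dotProduct_self (v : ι → ℂ) : (star v ⬝ᵥ v).re = ∑ i, ‖v i‖ ^ 2 := by
  rw [dotProduct, Complex.re_sum]
  refine sum_congr rfl fun i _ => ?_
  rw [Pi.star_apply, Complex.star_def, Complex.conj_mul']
  norm_cast

theorem sum_norm_sq_mulVec (A : Matrix κ ι ℂ) (v : ι → ℂ) :
    ∑ j, ‖(A *ᵥ v) j‖ ^ 2 = (star v ⬝ᵥ (Aᴴ * A) *ᵥ v).re := by
  rw [← mulVec_mulVec, dotProduct_mulVec, vecMul_conjTranspose, star_star,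
    re_star_dotProduct_self]

theorem norm_star_dotProduct_mulVec_le (E : Matrix ι ι ℂ) (v : ι → ℂ) :
    ‖star v ⬝ᵥ E *ᵥ v‖ ≤ ∑ k, ∑ k', ‖v k‖ * ‖E k k'‖ * ‖v k'‖ := by
  simp only [dotProduct, mulVec, mul_sum]
  refine (norm_sum_le _ _).trans (sum_le_sum fun k _ => (norm_sum_le _ _).trans_eq ?_)
  simp [mul_assoc]

theorem le_re_star_dotProduct_mulVec (G : Matrix ι ι ℂ) {a b : ℝ}
    (hdiag : ∀ k, G k k = a) (hoff : Pairwise fun k k' => ‖G k k'‖ ≤ b) (v : ι → ℂ) :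
    a * ∑ k, ‖v k‖ ^ 2 - b * ((∑ k, ‖v k‖) ^ 2 - ∑ k, ‖v k‖ ^ 2) ≤
      (star v ⬝ᵥ G *ᵥ v).re := by
  classical
  set E := G - (a : ℂ) • (1 : Matrix ι ι ℂ)
  have hE : ∀ k k', ‖E k k'‖ ≤ b - if k = k' then b else 0 := by
    intro k k'
    by_cases h : k = k'
    · subst h; simp [E, hdiag]
    · simpa [E, h, one_apply_ne h] using hoff h
  have hnormE : ‖star v ⬝ᵥ E *ᵥ v‖ ≤ b * ((∑ k, ‖v k‖) ^ 2 - ∑ k, ‖v k‖ ^ 2) := calc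
    _ ≤ ∑ k, ∑ k', ‖v k‖ * ‖E k k'‖ * ‖v k'‖ := norm_star_dotProduct_mulVec_le E v
    _ ≤ ∑ k, ∑ k', ‖v k‖ * (b - if k = k' then b else 0) * ‖v k'‖ := by
      gcongr with k _ k' _
      exact hE k k'
    _ = _ := by
      rw [sq (∑ k, ‖v k‖), sum_mul_sum]
      simp only [mul_sub, sub_mul, sum_sub_distrib, mul_ite, ite_mul, mul_zero, zero_mul,
        sum_ite_eq, mem_univ, if_true, mul_sum]
      congr 1
      · exact sum_congr rfl fun _ _ => sum_congr rfl fun _ _ => by ring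
      · exact sum_congr rfl fun _ _ => by ring
  have hscalar : (star v ⬝ᵥ ((a : ℂ) • (1 : Matrix ι ι ℂ)) *ᵥ v).re = a * ∑ k, ‖v k‖ ^ 2 := by
    rw [smul_mulVec, one_mulVec, dotProduct_smul, smul_eq_mul, Complex.re_ofReal_mul,
      re_star_dotProduct_self]
  have hsplit : G = (a : ℂ) • 1 + E := by simp [E]
  rw [hsplit, add_mulVec, dotProduct_add, Complex.add_re, hscalar]
  linarith [neg_abs_le (star v ⬝ᵥ E *ᵥ v).re, Complex.abs_re_le_norm (star v ⬝ᵥ E *ᵥ v)]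

theorem mul_l2norm_sq_le_l2norm_mulVec_sq (A : Matrix κ ι ℂ) {a b : ℝ} {s : ℕ} (hb : 0 ≤ b)
    (hdiag : ∀ k, (Aᴴ * A) k k = a) (hoff : Pairwise fun k k' => ‖(Aᴴ * A) k k'‖ ≤ b)
    (v : ι → ℂ) (hv : sparsity v ≤ s) :
    (a - b * (s - 1)) * l2norm v ^ 2 ≤ l2norm (A *ᵥ v) ^ 2 := by
  rw [l2norm_sq, l2norm_sq, sum_norm_sq_mulVec]
  refine le_trans ?_ (le_re_star_dotProduct_mulVec _ hdiag hoff v)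
  have hsparse : (∑ k, ‖v k‖) ^ 2 ≤ s * ∑ k, ‖v k‖ ^ 2 :=
    (sq_sum_norm_le_sparsity_mul v).trans (by gcongr)
  calc (a - b * (s - 1)) * ∑ k, ‖v k‖ ^ 2
      = a * ∑ k, ‖v k‖ ^ 2 - b * (s * ∑ k, ‖v k‖ ^ 2 - ∑ k, ‖v k‖ ^ 2) := by ring
    _ ≤ _ := by gcongr

end Sparse

theorem norm_geom_sum_le_of_pow_eq_one {𝕜 : Type*} [NormedDivisionRing 𝕜] {ζ : 𝕜} {n L : ℕ}
    (hζ : ζ ^ (n + L) = 1) (hζ1 : ζ ≠ 1) : ‖∑ j ∈ range n, ζ ^ j‖ ≤ L := by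
  have hsum : ∑ j ∈ range (n + L), ζ ^ j = 0 := by
    rw [geom_sum_eq hζ1, hζ, sub_self, zero_div]
  rw [sum_range_add, add_eq_zero_iff_eq_neg] at hsum
  rw [hsum, norm_neg]
  refine (norm_sum_le _ _).trans ?_
  calc ∑ i ∈ range L, ‖ζ ^ (n + i)‖ ≤ ∑ _i ∈ range L, (1 : ℝ) := by
        refine sum_le_sum fun i hi => ?_
        have hN : n + L ≠ 0 := by have := mem_range.mp hi; omega
        have hnorm : ‖ζ‖ = 1 :=
          (pow_eq_one_iff_of_nonneg (norm_nonneg ζ) hN).mp (by rw [← norm_pow, hζ, norm_one])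
        rw [norm_pow, hnorm, one_pow]
    _ = L := by simp

section HarmonicFrame

noncomputable def harmonicRoot (N : ℕ) : ℂ :=
  Complex.exp (2 * Real.pi * Complex.I / N)

theorem isPrimitiveRoot_harmonicRoot {N : ℕ} (hN : N ≠ 0) : IsPrimitiveRoot (harmonicRoot N) N :=
  Complex.isPrimitiveRoot_exp N hN

variable {n L : ℕ}

theorem harmonicFrame_apply (j : Fin n) (k : Fin (n + L)) :
    harmonicFrame n L j k = (Real.sqrt (n + L) : ℂ)⁻¹ * harmonicRoot (n + L) ^ ((j : ℕ) * k) := by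
  rw [harmonicFrame, harmonicRoot, one_div, ← Complex.exp_nat_mul, Nat.cast_mul]
  ring_nf

theorem star_harmonicFrame_mul_harmonicFrame (j : Fin n) (k k' : Fin (n + L)) :
    star (harmonicFrame n L j k) * harmonicFrame n L j k' =
      ((n + L : ℕ) : ℂ)⁻¹ *
        (harmonicRoot (n + L) ^ (k' : ℕ) / harmonicRoot (n + L) ^ (k : ℕ)) ^ (j : ℕ) := by
  rw [harmonicFrame_apply, harmonicFrame_apply]
  have hN : n + L ≠ 0 := k.pos.ne'
  have hω : ‖harmonicRoot (n + L)‖ = 1 :=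
    Complex.norm_eq_one_of_pow_eq_one (isPrimitiveRoot_harmonicRoot hN).pow_eq_one hN
  have hsqrt : (Real.sqrt (n + L) : ℂ) ^ 2 = ((n + L : ℕ) : ℂ) := by
    rw [← Complex.ofReal_pow, Real.sq_sqrt (by positivity)]
    push_cast
    ring
  rw [star_mul', star_inv₀, Complex.star_def, Complex.conj_ofReal, map_pow,
    ← Complex.inv_eq_conj hω, pow_mul', pow_mul', div_pow, ← hsqrt]
  ring

theorem harmonicFrame_gram_apply (k k' : Fin (n + L)) :
    ((harmonicFrame n L)ᴴ * harmonicFrame n L) k k' =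
      ((n + L : ℕ) : ℂ)⁻¹ * ∑ j ∈ range n,
        (harmonicRoot (n + L) ^ (k' : ℕ) / harmonicRoot (n + L) ^ (k : ℕ)) ^ j := by
  simp only [mul_apply, conjTranspose_apply, star_harmonicFrame_mul_harmonicFrame, ← mul_sum]
  rw [Fin.sum_univ_eq_sum_range (fun j => (_ / _) ^ j)]

theorem harmonicFrame_gram_diag (k : Fin (n + L)) :
    ((harmonicFrame n L)ᴴ * harmonicFrame n L) k k = ((n / (n + L : ℕ) : ℝ) : ℂ) := by
  simp [harmonicFrame_gram_apply, harmonicRoot, div_eq_inv_mul]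

theorem norm_harmonicFrame_gram_le {k k' : Fin (n + L)} (hkk' : k ≠ k') :
    ‖((harmonicFrame n L)ᴴ * harmonicFrame n L) k k'‖ ≤ L / (n + L : ℕ) := by
  have hN : n + L ≠ 0 := k.pos.ne'
  have hω := isPrimitiveRoot_harmonicRoot hN
  rw [harmonicFrame_gram_apply, norm_mul, norm_inv, Complex.norm_natCast, inv_mul_eq_div]
  gcongr
  apply norm_geom_sum_le_of_pow_eq_one
  · rw [div_pow, pow_right_comm, hω.pow_eq_one, one_pow, pow_right_comm, hω.pow_eq_one, one_pow,
      div_one]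
  · rw [Ne, div_eq_one_iff_eq (pow_ne_zero _ (hω.ne_zero hN))]
    exact fun h => hkk' (Fin.ext (hω.pow_inj k'.isLt k.isLt h).symm)

end HarmonicFrame

theorem harmonicFrame_lower_bound_general (n L s : ℕ)
    (hLs : ((L : ℝ) * s) ≤ ((n + L : ℕ) : ℝ) / 4)
    (z : Fin (n + L) → ℂ) (hz : sparsity z ≤ s) :
    (1 - 2 * (L : ℝ) * s / ((n + L : ℕ) : ℝ)) * (l2norm z) ^ 2
        ≤ (l2norm ((harmonicFrame n L).mulVec z)) ^ 2 ∧
    (1 / 2 : ℝ) * (l2norm z) ^ 2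
        ≤ (1 - 2 * (L : ℝ) * s / ((n + L : ℕ) : ℝ)) * (l2norm z) ^ 2 := by
  rcases (n + L).eq_zero_or_pos with hN | hN
  · obtain ⟨rfl, rfl⟩ : n = 0 ∧ L = 0 := by omega
    simp [l2norm]
  have hN' : (0 : ℝ) < (n + L : ℕ) := by exact_mod_cast hN
  have hframe := mul_l2norm_sq_le_l2norm_mulVec_sq (harmonicFrame n L) (by positivity)
    harmonicFrame_gram_diag (fun _ _ => norm_harmonicFrame_gram_le) z hz
  have hcoeff : (n : ℝ) / (n + L : ℕ) - L / (n + L : ℕ) * (s - 1) = 1 - L * s / (n + L : ℕ) := by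
    field_simp
    push_cast
    ring
  rw [hcoeff] at hframe
  constructor
  · refine le_trans ?_ hframe
    gcongr
    linarith
  · gcongr
    rw [le_sub_comm, div_le_iff₀ hN']
    linarith

/-- For the harmonic frame with `N = n+L` and `Ls ≤ N/4`, every `s`-sparse `z`
satisfies `‖Dz‖₂² ≥ (1 − 2Ls/N)‖z‖₂² ≥ ‖z‖₂²/2`. -/
theorem harmonicFrame_lower_bound (n L s : ℕ) (hn : 0 < n)
    (hLs : ((L : ℝ) * s) ≤ ((n + L : ℕ) : ℝ) / 4)
    (z : Fin (n + L) → ℂ) (hz : sparsity z ≤ s) :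
    (1 - 2 * (L : ℝ) * s / ((n + L : ℕ) : ℝ)) * (l2norm z) ^ 2
        ≤ (l2norm ((harmonicFrame n L).mulVec z)) ^ 2 ∧
    (1 / 2 : ℝ) * (l2norm z) ^ 2
        ≤ (1 - 2 * (L : ℝ) * s / ((n + L : ℕ) : ℝ)) * (l2norm z) ^ 2 :=
  harmonicFrame_lower_bound_general n L s hLs z hz
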